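/- Let A ∈ ℝ^{n×n} be invertible, b ∈ ℝⁿ, γ ∈ (0,2), θ ∈ [0,1). Suppose x* satisfies Ax* − |x*| − b = 0 and ‖A^{-1}‖ < 1/[θ(((4/γ) − 1)‖A‖ + 1) + 2((2/γ) − 1)‖A‖ + 1]. Then any sequence {x^k} in ℝⁿ satisfying ‖(2/γ)A x^{k+1} − [((2/γ) − 1)A x^k + |x^k| + b]‖ ≤ θ‖Ax^k − |x^k| − b‖ for all k ≥ 0 converges linearly to x* from any starting point x^0. -/

import Mathlib

/-!
Write `u = 2/γ` and `eₖ = xᵏ - x*`. Since `b = A x* - |x*|`, the inexactness residual of step `k`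
is `u A eₖ₊₁ - (u - 1) A eₖ - (|xᵏ| - |x*|)`, while the AVE residual `A xᵏ - |xᵏ| - b` has norm at
most `(‖A‖ + 1) ‖eₖ‖` because `|·|` is 1-Lipschitz. Solving for `eₖ₊₁` through `A⁻¹` gives
`‖eₖ₊₁‖ ≤ ‖A⁻¹‖ (θ (‖A‖ + 1) + (u - 1) ‖A‖ + 1) / u · ‖eₖ‖`, and the hypothesis on `‖A⁻¹‖` makes
this factor smaller than one.
-/

open Matrix Filter

/-- Componentwise absolute value of a vector in Euclidean space. -/
noncomputable def vabs {n : ℕ} (x : EuclideanSpace ℝ (Fin n)) : EuclideanSpace ℝ (Fin n) :=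
  WithLp.toLp 2 (fun i => |x i|)

/-- A matrix acting on Euclidean space (so that vector norms are the Euclidean 2-norm). -/
noncomputable def mulV {n : ℕ} (M : Matrix (Fin n) (Fin n) ℝ) (x : EuclideanSpace ℝ (Fin n)) :
    EuclideanSpace ℝ (Fin n) :=
  Matrix.toEuclideanCLM (𝕜 := ℝ) M x

/-- Spectral norm of a real matrix: the operator norm induced by the Euclidean vector norm. -/
noncomputable def spec {n : ℕ} (M : Matrix (Fin n) (Fin n) ℝ) : ℝ :=
  ‖Matrix.toEuclideanCLM (𝕜 := ℝ) M‖

/-- The GAVE residual function `F(x) = A x − B |x| − b`. -/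
noncomputable def gaveF {n : ℕ} (A B : Matrix (Fin n) (Fin n) ℝ)
    (b : EuclideanSpace ℝ (Fin n)) (x : EuclideanSpace ℝ (Fin n)) : EuclideanSpace ℝ (Fin n) :=
  mulV A x - mulV B (vabs x) - b

/-- The AVE residual function `A x − |x| − b` (the GAVE with `B = I`). -/
noncomputable def aveF {n : ℕ} (A : Matrix (Fin n) (Fin n) ℝ)
    (b : EuclideanSpace ℝ (Fin n)) (x : EuclideanSpace ℝ (Fin n)) : EuclideanSpace ℝ (Fin n) :=
  mulV A x - vabs x - b

/-- A sequence converges linearly to `xs`: the distances to `xs` contract by a fixed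
factor `c < 1` at every step, and the sequence tends to `xs`. -/
def ConvergesLinearlyTo {n : ℕ} (x : ℕ → EuclideanSpace ℝ (Fin n))
    (xs : EuclideanSpace ℝ (Fin n)) : Prop :=
  (∃ c : ℝ, 0 ≤ c ∧ c < 1 ∧ ∀ k : ℕ, ‖x (k + 1) - xs‖ ≤ c * ‖x k - xs‖) ∧
    Tendsto x atTop (nhds xs)

open Topology

theorem tendsto_of_norm_sub_le_mul {E : Type*} [SeminormedAddCommGroup E] {x : ℕ → E} {l : E}
    {c : ℝ} (hc0 : 0 ≤ c) (hc1 : c < 1) (h : ∀ k, ‖x (k + 1) - l‖ ≤ c * ‖x k - l‖) :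
    Tendsto x atTop (𝓝 l) := by
  have hgeom : ∀ k, ‖x k - l‖ ≤ c ^ k * ‖x 0 - l‖ := fun k =>
    le_geom (u := fun k => ‖x k - l‖) hc0 k fun j _ => h j
  have hlim : Tendsto (fun k => c ^ k * ‖x 0 - l‖) atTop (𝓝 0) := by
    simpa using (tendsto_pow_atTop_nhds_zero_of_lt_one hc0 hc1).mul_const ‖x 0 - l‖
  exact tendsto_iff_norm_sub_tendsto_zero.2 (squeeze_zero (fun _ => norm_nonneg _) hgeom hlim)

theorem convergesLinearlyTo_of_norm_sub_le_mul {n : ℕ} {x : ℕ → EuclideanSpace ℝ (Fin n)}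
    {xs : EuclideanSpace ℝ (Fin n)} {c : ℝ} (hc1 : c < 1)
    (h : ∀ k, ‖x (k + 1) - xs‖ ≤ c * ‖x k - xs‖) : ConvergesLinearlyTo x xs := by
  have h' : ∀ k, ‖x (k + 1) - xs‖ ≤ max c 0 * ‖x k - xs‖ := fun k =>
    (h k).trans (mul_le_mul_of_nonneg_right (le_max_left c 0) (norm_nonneg _))
  have hc0 : 0 ≤ max c 0 := le_max_right c 0
  have hc1' : max c 0 < 1 := max_lt hc1 one_pos
  exact ⟨⟨max c 0, hc0, hc1', h'⟩, tendsto_of_norm_sub_le_mul hc0 hc1' h'⟩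

section Matrices

variable {n : ℕ}

theorem norm_vabs_sub_vabs_le (x y : EuclideanSpace ℝ (Fin n)) :
    ‖vabs x - vabs y‖ ≤ ‖x - y‖ := by
  rw [EuclideanSpace.norm_eq, EuclideanSpace.norm_eq]
  gcongr with i
  exact abs_abs_sub_abs_le_abs_sub (x i) (y i)

theorem mulV_smul (s : ℝ) (A : Matrix (Fin n) (Fin n) ℝ) (z : EuclideanSpace ℝ (Fin n)) :
    mulV (s • A) z = s • mulV A z := by
  simp [mulV]

theorem mulV_sub (A : Matrix (Fin n) (Fin n) ℝ) (y z : EuclideanSpace ℝ (Fin n)) :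
    mulV A (y - z) = mulV A y - mulV A z := by
  simp [mulV]

theorem norm_mulV_le (A : Matrix (Fin n) (Fin n) ℝ) (z : EuclideanSpace ℝ (Fin n)) :
    ‖mulV A z‖ ≤ spec A * ‖z‖ :=
  (Matrix.toEuclideanCLM (𝕜 := ℝ) A).le_opNorm z

theorem norm_le_spec_inv_mul_norm_mulV {A : Matrix (Fin n) (Fin n) ℝ} (hA : IsUnit A)
    (z : EuclideanSpace ℝ (Fin n)) : ‖z‖ ≤ spec A⁻¹ * ‖mulV A z‖ := by
  have hinv : A⁻¹ * A = 1 := Matrix.nonsing_inv_mul A ((Matrix.isUnit_iff_isUnit_det A).mp hA)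
  have hz : mulV A⁻¹ (mulV A z) = z := by
    simpa [mulV, map_mul] using congrArg (fun M => Matrix.toEuclideanCLM (𝕜 := ℝ) M z) hinv
  calc ‖z‖ = ‖mulV A⁻¹ (mulV A z)‖ := by rw [hz]
    _ ≤ spec A⁻¹ * ‖mulV A z‖ := norm_mulV_le _ _

end Matrices

section Residuals

variable {n : ℕ} {A : Matrix (Fin n) (Fin n) ℝ} {b xs : EuclideanSpace ℝ (Fin n)}

theorem sub_eq_of_aveF_eq_zero (hxs : aveF A b xs = 0) : mulV A xs - vabs xs = b :=
  sub_eq_zero.mp hxs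

theorem norm_aveF_le (hxs : aveF A b xs = 0) (y : EuclideanSpace ℝ (Fin n)) :
    ‖aveF A b y‖ ≤ (spec A + 1) * ‖y - xs‖ := by
  have hF : aveF A b y = mulV A (y - xs) - (vabs y - vabs xs) := by
    rw [aveF, mulV_sub, ← sub_eq_of_aveF_eq_zero hxs]
    abel
  calc ‖aveF A b y‖ ≤ ‖mulV A (y - xs)‖ + ‖vabs y - vabs xs‖ := hF ▸ norm_sub_le _ _
    _ ≤ spec A * ‖y - xs‖ + ‖y - xs‖ := add_le_add (norm_mulV_le _ _) (norm_vabs_sub_vabs_le _ _)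
    _ = (spec A + 1) * ‖y - xs‖ := by ring

theorem smul_mulV_sub_eq (hxs : aveF A b xs = 0) (u : ℝ) (y y' : EuclideanSpace ℝ (Fin n)) :
    u • mulV A (y' - xs) = (mulV (u • A) y' - (mulV ((u - 1) • A) y + vabs y + b)) +
      (u - 1) • mulV A (y - xs) + (vabs y - vabs xs) := by
  rw [mulV_smul, mulV_smul, mulV_sub, mulV_sub, ← sub_eq_of_aveF_eq_zero hxs]
  module

theorem smul_norm_mulV_sub_le (hxs : aveF A b xs = 0) {u θ : ℝ} (hu : 1 ≤ u) (hθ : 0 ≤ θ)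
    {y y' : EuclideanSpace ℝ (Fin n)}
    (hstep : ‖mulV (u • A) y' - (mulV ((u - 1) • A) y + vabs y + b)‖ ≤ θ * ‖aveF A b y‖) :
    u * ‖mulV A (y' - xs)‖ ≤ (θ * (spec A + 1) + (u - 1) * spec A + 1) * ‖y - xs‖ := by
  have hres := hstep.trans (mul_le_mul_of_nonneg_left (norm_aveF_le hxs y) hθ)
  have hmul : ‖(u - 1) • mulV A (y - xs)‖ ≤ (u - 1) * (spec A * ‖y - xs‖) := by
    rw [norm_smul, Real.norm_of_nonneg (sub_nonneg.2 hu)]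
    exact mul_le_mul_of_nonneg_left (norm_mulV_le _ _) (sub_nonneg.2 hu)
  calc u * ‖mulV A (y' - xs)‖ = ‖u • mulV A (y' - xs)‖ := by
        rw [norm_smul, Real.norm_of_nonneg (by linarith)]
    _ ≤ θ * ((spec A + 1) * ‖y - xs‖) + (u - 1) * (spec A * ‖y - xs‖) + ‖y - xs‖ := by
        rw [smul_mulV_sub_eq hxs]
        exact norm_add₃_le.trans (add_le_add (add_le_add hres hmul) (norm_vabs_sub_vabs_le _ _))
    _ = (θ * (spec A + 1) + (u - 1) * spec A + 1) * ‖y - xs‖ := by ring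

theorem norm_sub_le_of_inexact_step (hA : IsUnit A) (hxs : aveF A b xs = 0) {u θ : ℝ}
    (hu : 1 ≤ u) (hθ : 0 ≤ θ) {y y' : EuclideanSpace ℝ (Fin n)}
    (hstep : ‖mulV (u • A) y' - (mulV ((u - 1) • A) y + vabs y + b)‖ ≤ θ * ‖aveF A b y‖) :
    ‖y' - xs‖ ≤ spec A⁻¹ * ((θ * (spec A + 1) + (u - 1) * spec A + 1) / u) * ‖y - xs‖ := by
  have hu0 : 0 < u := by linarith
  have hA' : ‖mulV A (y' - xs)‖ ≤ (θ * (spec A + 1) + (u - 1) * spec A + 1) / u * ‖y - xs‖ := by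
    rw [div_mul_eq_mul_div, le_div_iff₀ hu0, mul_comm]
    exact smul_norm_mulV_sub_le hxs hu hθ hstep
  calc ‖y' - xs‖ ≤ spec A⁻¹ * ‖mulV A (y' - xs)‖ := norm_le_spec_inv_mul_norm_mulV hA _
    _ ≤ spec A⁻¹ * ((θ * (spec A + 1) + (u - 1) * spec A + 1) / u * ‖y - xs‖) :=
        mul_le_mul_of_nonneg_left hA' (norm_nonneg _)
    _ = _ := by ring

end Residuals

theorem inexactDR_rate_lt_one {a i θ u : ℝ} (ha : 0 ≤ a) (hi : 0 ≤ i) (hθ : 0 ≤ θ) (hu : 1 ≤ u)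
    (hcond : i < 1 / (θ * ((2 * u - 1) * a + 1) + 2 * (u - 1) * a + 1)) :
    i * ((θ * (a + 1) + (u - 1) * a + 1) / u) < 1 := by
  have hu0 : 0 < u := by linarith
  have hD : 0 < θ * ((2 * u - 1) * a + 1) + 2 * (u - 1) * a + 1 := by
    have : 0 ≤ (2 * u - 1) * a + 1 := by nlinarith
    nlinarith [mul_nonneg hθ this]
  have hiD := (lt_div_iff₀ hD).1 hcond
  have hN : θ * (a + 1) + (u - 1) * a + 1 ≤
      u * (θ * ((2 * u - 1) * a + 1) + 2 * (u - 1) * a + 1) := by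
    have hu1 : 0 ≤ u - 1 := by linarith
    nlinarith [mul_nonneg (mul_nonneg hθ ha) (mul_nonneg hu1 (by linarith : (0 : ℝ) ≤ 2 * u + 1)),
      mul_nonneg hθ hu1, mul_nonneg (mul_nonneg hu1 ha) (by linarith : (0 : ℝ) ≤ 2 * u - 1)]
  rw [mul_div_assoc', div_lt_one hu0]
  calc i * (θ * (a + 1) + (u - 1) * a + 1)
      ≤ i * (u * (θ * ((2 * u - 1) * a + 1) + 2 * (u - 1) * a + 1)) :=
        mul_le_mul_of_nonneg_left hN hi
    _ = u * (i * (θ * ((2 * u - 1) * a + 1) + 2 * (u - 1) * a + 1)) := by ring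
    _ < u := by nlinarith

theorem stmt12_general {n : ℕ} (A : Matrix (Fin n) (Fin n) ℝ)
    (b : EuclideanSpace ℝ (Fin n)) (hA : IsUnit A) (γ θ : ℝ)
    (hγ0 : 0 < γ) (hγ2 : γ < 2) (hθ0 : 0 ≤ θ)
    (xs : EuclideanSpace ℝ (Fin n)) (hxs : aveF A b xs = 0)
    (hcond : spec A⁻¹ <
      1 / (θ * ((4 / γ - 1) * spec A + 1) + 2 * (2 / γ - 1) * spec A + 1))
    (x : ℕ → EuclideanSpace ℝ (Fin n))
    (hx : ∀ k : ℕ, ‖mulV ((2 / γ) • A) (x (k + 1)) -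
        (mulV ((2 / γ - 1) • A) (x k) + vabs (x k) + b)‖ ≤
      θ * ‖aveF A b (x k)‖) :
    ConvergesLinearlyTo x xs := by
  have hu : 1 ≤ 2 / γ := ((one_lt_div hγ0).2 hγ2).le
  rw [show 4 / γ = 2 * (2 / γ) by ring] at hcond
  exact convergesLinearlyTo_of_norm_sub_le_mul
    (inexactDR_rate_lt_one (norm_nonneg _) (norm_nonneg _) hθ0 hu hcond)
    fun k => norm_sub_le_of_inexact_step hA hxs hu hθ0 (hx k)

theorem stmt12 {n : ℕ} (A : Matrix (Fin n) (Fin n) ℝ)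
    (b : EuclideanSpace ℝ (Fin n)) (hA : IsUnit A) (γ θ : ℝ)
    (hγ0 : 0 < γ) (hγ2 : γ < 2) (hθ0 : 0 ≤ θ) (hθ1 : θ < 1)
    (xs : EuclideanSpace ℝ (Fin n)) (hxs : aveF A b xs = 0)
    (hcond : spec A⁻¹ <
      1 / (θ * ((4 / γ - 1) * spec A + 1) + 2 * (2 / γ - 1) * spec A + 1))
    (x : ℕ → EuclideanSpace ℝ (Fin n))
    (hx : ∀ k : ℕ, ‖mulV ((2 / γ) • A) (x (k + 1)) -
        (mulV ((2 / γ - 1) • A) (x k) + vabs (x k) + b)‖ ≤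
      θ * ‖aveF A b (x k)‖) :
    ConvergesLinearlyTo x xs :=
  stmt12_general A b hA γ θ hγ0 hγ2 hθ0 xs hxs hcond x hx
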